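/- Let ω = exp(2πi/3) and define on ℂ³ (indexed by ZMod 3) the operators X e_n = e_{n+1}, Z e_n = ω^n e_n, D_{(u,v)} = ω^{2uv} X^u Z^v, A_{(0,0)} = (1/3) Σ_{u,v} D_{(u,v)}, A_χ = D_χ A_{(0,0)} D_χ†, and for a unit vector v ∈ ℂ³ the discrete Wigner function W_χ(v) = (1/3)·Re⟨v, A_χ v⟩. Then for every unit vector v ∈ ℂ³, the number of points χ ∈ (ZMod 3)² with W_χ(v) < 0 is at most 4. -/

import Mathlib

open scoped BigOperators
open Complex Matrix

noncomputable def omg (p : ℕ) : ℂ := Complex.exp (2 * Real.pi * Complex.I / p)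

noncomputable def Hmat (p : ℕ) : Matrix (ZMod p) (ZMod p) ℂ :=
  Matrix.of fun j k => (Real.sqrt p : ℂ)⁻¹ * omg p ^ ((j * k : ZMod p).val)

noncomputable def VS (p : ℕ) : Matrix (ZMod p) (ZMod p) ℂ :=
  Matrix.diagonal fun k => omg p ^ (((2 : ZMod p)⁻¹ * k ^ 2).val)

def Xmat (p : ℕ) : Matrix (ZMod p) (ZMod p) ℂ :=
  Matrix.of fun j k => if j = k + 1 then 1 else 0

noncomputable def Zmat (p : ℕ) : Matrix (ZMod p) (ZMod p) ℂ :=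
  Matrix.diagonal fun k => omg p ^ (k.val)

noncomputable def Dmat (p : ℕ) [NeZero p] (u v : ZMod p) : Matrix (ZMod p) (ZMod p) ℂ :=
  omg p ^ (((2 : ZMod p)⁻¹ * u * v).val) • (Xmat p ^ u.val * Zmat p ^ v.val)

noncomputable def A0 (p : ℕ) [NeZero p] : Matrix (ZMod p) (ZMod p) ℂ :=
  (p : ℂ)⁻¹ • ∑ u : ZMod p, ∑ v : ZMod p, Dmat p u v

noncomputable def Amat (p : ℕ) [NeZero p] (χ : ZMod p × ZMod p) : Matrix (ZMod p) (ZMod p) ℂ :=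
  Dmat p χ.1 χ.2 * A0 p * (Dmat p χ.1 χ.2)ᴴ

noncomputable def W (p : ℕ) [NeZero p] (χ : ZMod p × ZMod p) (v : ZMod p → ℂ) : ℂ :=
  (p : ℂ)⁻¹ * (star v ⬝ᵥ (Amat p χ).mulVec v)

def Pmat (p : ℕ) : Matrix (ZMod p) (ZMod p) ℂ :=
  Matrix.of fun j k => if j = -k then 1 else 0

/-- The real-valued discrete Wigner function `W_χ(v) = (1/3)·Re⟨v, A_χ v⟩`. -/
noncomputable def Wre (χ : ZMod 3 × ZMod 3) (v : ZMod 3 → ℂ) : ℝ :=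
  (1 / 3) * (star v ⬝ᵥ (Amat 3 χ).mulVec v).re

/-!
Along every line of the affine plane `(ZMod p)²` (`p` odd) the phase point operators sum to a
positive semidefinite rank-one operator. Indeed `A_(u,v) j k = [j + k = 2u] ω^((j - k) v)`, so
a vertical line `{a} × ZMod p` gives `p |e_a⟩⟨e_a|`, and the graph of `t ↦ m t + b` gives
`|ψ⟩⟨ψ|` for the chirp `ψ j = ω^(m j² / 2 + b j)`. Hence the Wigner function of any vector
has nonnegative sum along every line, so its negative points contain no line, and a line-free
subset of `(ZMod 3)²` has at most four points.
-/

open ZMod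
open scoped ComplexOrder

variable {p : ℕ}

lemma two_mul_inv_two_of_odd (hp : Odd p) : (2 : ZMod p) * 2⁻¹ = 1 := by
  simpa using ZMod.coe_mul_inv_eq_one 2 (Nat.coprime_two_left.2 hp)

lemma omg_pow_val [NeZero p] (k : ZMod p) : omg p ^ k.val = stdAddChar k := by
  rw [omg, ← Complex.exp_nat_mul, stdAddChar_apply, toCircle_apply]
  congr 1
  ring

lemma Xmat_pow_apply [NeZero p] (n : ℕ) (j k : ZMod p) :
    (Xmat p ^ n) j k = if j = k + n then 1 else 0 := by
  induction n generalizing k with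
  | zero => simp [one_apply]
  | succ n ih =>
    rw [pow_succ, mul_apply, Finset.sum_eq_single (k + 1)]
    · rw [ih]
      simp [Xmat, add_assoc, add_comm (1 : ZMod p)]
    · intro b _ hb
      simp [Xmat, hb]
    · simp

lemma Zmat_pow [NeZero p] (n : ℕ) :
    Zmat p ^ n = diagonal fun k => stdAddChar (k * (n : ZMod p)) := by
  simp [Zmat, omg_pow_val, diagonal_pow, ← AddChar.map_nsmul_eq_pow, mul_comm]

lemma Dmat_apply [NeZero p] (u v j k : ZMod p) :
    Dmat p u v j k = if j = k + u then stdAddChar (2⁻¹ * u * v + k * v) else 0 := by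
  simp [Dmat, Xmat_pow_apply, Zmat_pow, mul_diagonal, omg_pow_val, AddChar.map_add_eq_mul]

lemma A0_eq_Pmat [NeZero p] (hp : Odd p) : A0 p = Pmat p := by
  ext j k
  have h2 := two_mul_inv_two_of_odd hp
  have hcond : 2⁻¹ * (j - k) + k = 0 ↔ j = -k := by
    constructor <;> intro h
    · linear_combination 2 * h + (k - j) * h2
    · linear_combination 2⁻¹ * h - k * h2
  rw [A0, Matrix.smul_apply, Matrix.sum_apply, Finset.sum_eq_single (j - k)]
  · have hsum := AddChar.sum_mulShift (2⁻¹ * (j - k) + k) (isPrimitive_stdAddChar p)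
    rw [Matrix.sum_apply]
    simp only [Dmat_apply, add_sub_cancel, if_true, ← add_mul, mul_comm _ (_ + k)] at hsum ⊢
    rw [hsum]
    simp [Pmat, hcond, NeZero.ne]
  · intro u _ hu
    rw [Matrix.sum_apply]
    have hne : j ≠ k + u := fun h => hu (eq_sub_of_add_eq' h.symm)
    simp [Dmat_apply, hne]
  · simp

lemma Amat_apply [NeZero p] (hp : Odd p) (χ : ZMod p × ZMod p) (j k : ZMod p) :
    Amat p χ j k = if j + k = 2 * χ.1 then stdAddChar ((j - k) * χ.2) else 0 := by
  obtain ⟨u, v⟩ := χ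
  have hshift : ∀ a b : ZMod p, a = b + u ↔ b = a - u := fun a b => by
    constructor <;> intro h <;> linear_combination -h
  have hcond : k - u = -(j - u) ↔ j + k = 2 * u := by
    constructor <;> intro h <;> linear_combination h
  simp only [Amat, A0_eq_Pmat hp, mul_apply, conjTranspose_apply, Dmat_apply, Pmat, of_apply,
    hshift, ite_mul, zero_mul, mul_one, Finset.sum_ite_eq', Finset.mem_univ, if_true,
    neg_eq_iff_eq_neg, hcond, apply_ite star, star_zero, mul_ite, mul_zero]
  split_ifs with h
  · rw [Complex.star_def, ← AddChar.map_neg_eq_conj, ← AddChar.map_add_eq_mul]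
    congr 1
    linear_combination -v * h
  · rfl

lemma sum_Amat_vertical [NeZero p] (hp : Odd p) (a : ZMod p) :
    ∑ t, Amat p (a, t) = (p : ℂ) • vecMulVec (Pi.single a 1) (star (Pi.single a 1)) := by
  ext j k
  have h2 := two_mul_inv_two_of_odd hp
  have hpoint : j + k = 2 * a ∧ j - k = 0 ↔ j = a ∧ k = a := by
    constructor
    · rintro ⟨h, h'⟩
      constructor
      · linear_combination 2⁻¹ * h + 2⁻¹ * h' - (j - a) * h2
      · linear_combination 2⁻¹ * h - 2⁻¹ * h' - (k - a) * h2
    · rintro ⟨rfl, rfl⟩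
      constructor <;> ring
  have hsum := AddChar.sum_mulShift (j - k) (isPrimitive_stdAddChar p)
  simp only [Matrix.sum_apply, Amat_apply hp, Finset.sum_ite_irrel, Finset.sum_const_zero,
    mul_comm (j - k), hsum]
  simp [← ite_and, hpoint, vecMulVec_apply, Pi.single_apply, and_comm]

lemma sum_Amat_graph [NeZero p] (hp : Odd p) (m b : ZMod p) :
    ∑ t, Amat p (t, m * t + b) =
      vecMulVec (fun j => stdAddChar (2⁻¹ * m * j ^ 2 + b * j))
        (star fun j => stdAddChar (2⁻¹ * m * j ^ 2 + b * j)) := by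
  ext j k
  have h2 := two_mul_inv_two_of_odd hp
  have hu : ∀ t : ZMod p, j + k = 2 * t ↔ 2⁻¹ * (j + k) = t := fun t => by
    constructor <;> intro h
    · linear_combination 2⁻¹ * h + t * h2
    · linear_combination 2 * h - (j + k) * h2
  simp only [Matrix.sum_apply, Amat_apply hp, hu, Finset.sum_ite_eq, Finset.mem_univ, if_true,
    vecMulVec_apply, Pi.star_apply, Complex.star_def, ← AddChar.map_neg_eq_conj,
    ← AddChar.map_add_eq_mul]
  congr 1
  ring

lemma posSemidef_sum_Amat_vertical [NeZero p] (hp : Odd p) (a : ZMod p) :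
    (∑ t, Amat p (a, t)).PosSemidef := by
  rw [sum_Amat_vertical hp]
  exact (posSemidef_vecMulVec_self_star _).smul (Nat.cast_nonneg' p)

lemma posSemidef_sum_Amat_graph [NeZero p] (hp : Odd p) (m b : ZMod p) :
    (∑ t, Amat p (t, m * t + b)).PosSemidef := by
  rw [sum_Amat_graph hp]
  exact posSemidef_vecMulVec_self_star _

lemma sum_re_star_dotProduct_mulVec_nonneg {n ι : Type*} [Fintype n] (s : Finset ι)
    (A : ι → Matrix n n ℂ) (hA : (∑ i ∈ s, A i).PosSemidef) (v : n → ℂ) :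
    0 ≤ ∑ i ∈ s, (star v ⬝ᵥ A i *ᵥ v).re := by
  rw [← Complex.re_sum, ← dotProduct_sum, ← Matrix.sum_mulVec]
  exact (Complex.nonneg_iff.1 (hA.dotProduct_mulVec_nonneg v)).1

set_option maxRecDepth 10000 in
lemma exists_line_subset_of_five_le_card (s : Finset (ZMod 3 × ZMod 3)) (hs : 5 ≤ s.card) :
    (∃ a, ∀ t, (a, t) ∈ s) ∨ ∃ m b, ∀ t, (t, m * t + b) ∈ s := by
  revert s
  decide

theorem at_most_four_negative_wigner_points_general (v : ZMod 3 → ℂ) :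
    (Finset.univ.filter fun χ : ZMod 3 × ZMod 3 => Wre χ v < 0).card ≤ 4 := by
  set s := Finset.univ.filter fun χ : ZMod 3 × ZMod 3 => Wre χ v < 0
  have hline : ∀ f : ZMod 3 → ZMod 3 × ZMod 3,
      (∑ t, Amat 3 (f t)).PosSemidef → ¬ ∀ t, f t ∈ s := by
    intro f hf hs
    have hneg : ∑ t, Wre (f t) v < 0 :=
      Finset.sum_neg (fun t _ => (Finset.mem_filter.1 (hs t)).2) Finset.univ_nonempty
    have hnonneg := sum_re_star_dotProduct_mulVec_nonneg Finset.univ (fun t => Amat 3 (f t)) hf v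
    simp only [Wre, ← Finset.mul_sum] at hneg
    linarith
  by_contra! hcard
  rcases exists_line_subset_of_five_le_card s hcard with ⟨a, ha⟩ | ⟨m, b, hmb⟩
  · exact hline _ (posSemidef_sum_Amat_vertical (by decide) a) ha
  · exact hline _ (posSemidef_sum_Amat_graph (by decide) m b) hmb

theorem at_most_four_negative_wigner_points (v : ZMod 3 → ℂ)
    (hv : star v ⬝ᵥ v = 1) :
    (Finset.univ.filter fun χ : ZMod 3 × ZMod 3 => Wre χ v < 0).card ≤ 4 :=
  at_most_four_negative_wigner_points_general v
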